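/- Let A and B be finite-dimensional unital *-algebras with a non-degenerate pairing and induced coproducts and maps S_A, S_B as above. The coproduct Δ on A is a *-map (Δ(a*) = Δ(a)* for all a) if and only if b ↦ S_B(b)* is multiplicative, i.e., S_B(bb')* = S_B(b)* S_B(b')* for all b, b' ∈ B. -/

import Mathlib

/-!
Testing against `b ⊗ b'` separates the points of `A ⊗ A`, because the pairing is non-degenerate
and `B` is finite-dimensional. Under this pairing the involution of `A ⊗ A` becomes complex
conjugation composed with `σ = (b ↦ S_B(b)*)` in both legs, so `Δ(a*) = Δ(a)*` tested against
`b ⊗ b'` reads `⟨a, σ(bb')⟩ = ⟨a, σ(b) σ(b')⟩`; non-degeneracy in `B` finishes the proof.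
-/

open TensorProduct

/-- The pairing of `A ⊗ A` with the pair `(b, b')`, i.e. `x ⊗ y ↦ ⟨x,b⟩⟨y,b'⟩`. -/
noncomputable def pairTT {A B : Type*} [AddCommGroup A] [Module ℂ A]
    [AddCommGroup B] [Module ℂ B]
    (β : A →ₗ[ℂ] B →ₗ[ℂ] ℂ) (b b' : B) : A ⊗[ℂ] A →ₗ[ℂ] ℂ :=
  (LinearMap.mul' ℂ ℂ).comp (TensorProduct.map (β.flip b) (β.flip b'))

/-- The canonical involution on `A ⊗[ℂ] A`, determined by `(x ⊗ y)* = x* ⊗ y*`. -/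
noncomputable def tstar (A : Type*) [AddCommGroup A] [Module ℂ A]
    [StarAddMonoid A] [StarModule ℂ A] : A ⊗[ℂ] A →+ A ⊗[ℂ] A :=
  TensorProduct.liftAddHom
    (AddMonoidHom.mk'
      (fun x => AddMonoidHom.mk' (fun y => star x ⊗ₜ[ℂ] star y)
        (fun y y' => by simp [star_add, TensorProduct.tmul_add]))
      (fun x x' => by
        ext y
        simp [star_add, TensorProduct.add_tmul]))
    (fun c x y => by
      simp [star_smul, TensorProduct.smul_tmul, TensorProduct.tmul_smul])

section Pairing

variable {A B : Type*} [AddCommGroup A] [Module ℂ A] [AddCommGroup B] [Module ℂ B]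
  (β : A →ₗ[ℂ] B →ₗ[ℂ] ℂ)

@[simp]
theorem pairTT_tmul (b b' : B) (x y : A) :
    pairTT β b b' (x ⊗ₜ[ℂ] y) = β x b * β y b' := by
  simp [pairTT]

theorem pairTT_eq_dualDistrib (b b' : B) (t : A ⊗[ℂ] A) :
    pairTT β b b' t = dualDistrib ℂ B B (map β β t) (b ⊗ₜ[ℂ] b') := by
  induction t using TensorProduct.induction_on with
  | zero => simp
  | tmul x y => simp [dualDistrib_apply]
  | add u v hu hv => simp [hu, hv]

theorem ext_iff_pairTT [FiniteDimensional ℂ B] (hβ : Function.Injective β) {t t' : A ⊗[ℂ] A} :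
    t = t' ↔ ∀ b b' : B, pairTT β b b' t = pairTT β b b' t' := by
  refine ⟨fun h _ _ => h ▸ rfl, fun h => ?_⟩
  -- `β ⊗ β : A ⊗ A → B* ⊗ B*` is injective over a field, and `B* ⊗ B* ≃ (B ⊗ B)*` as `B` is
  -- finite-dimensional.
  have hdual : Function.Injective (dualDistrib ℂ B B) := (dualDistribEquiv ℂ B B).injective
  refine map_injective_of_flat_flat β β hβ hβ (hdual (TensorProduct.ext' fun b b' => ?_))
  simpa only [pairTT_eq_dualDistrib] using h b b'

theorem pairTT_tstar [StarAddMonoid A] [StarModule ℂ A] {σ : B → B}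
    (hσ : ∀ a b, β (star a) b = starRingEnd ℂ (β a (σ b))) (b b' : B) (t : A ⊗[ℂ] A) :
    pairTT β b b' (tstar A t) = starRingEnd ℂ (pairTT β (σ b) (σ b') t) := by
  induction t using TensorProduct.induction_on with
  | zero => simp
  | tmul x y => simp [tstar, hσ]
  | add u v hu hv => simp [hu, hv]

end Pairing

theorem coprod_star_iff_SB_star_mul_general
    {A B : Type*} [Ring A] [Algebra ℂ A] [StarRing A] [StarModule ℂ A]
    [Ring B] [Algebra ℂ B] [StarRing B]
    [FiniteDimensional ℂ B]
    (β : A →ₗ[ℂ] B →ₗ[ℂ] ℂ)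
    (hβA : ∀ a : A, (∀ b : B, β a b = 0) → a = 0)
    (hβB : ∀ b : B, (∀ a : A, β a b = 0) → b = 0)
    (Δ : A →ₗ[ℂ] A ⊗[ℂ] A)
    (hΔ : ∀ (a : A) (b b' : B), pairTT β b b' (Δ a) = β a (b * b'))
    (SB : B →ₗ[ℂ] B)
    (hSB : ∀ (a : A) (b : B), β a (star (SB b)) = starRingEnd ℂ (β (star a) b)) :
    (∀ a : A, Δ (star a) = tstar A (Δ a)) ↔
      (∀ b b' : B, star (SB (b * b')) = star (SB b) * star (SB b')) := by
  let σ : B → B := fun b => star (SB b)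
  have hσ : ∀ a b, β (star a) b = starRingEnd ℂ (β a (σ b)) := fun a b => by
    simp [σ, hSB]
  have hβ : Function.Injective β := (injective_iff_map_eq_zero β).2 fun a ha =>
    hβA a fun b => by simp [ha]
  have hβflip : Function.Injective β.flip := (injective_iff_map_eq_zero β.flip).2 fun b hb =>
    hβB b fun a => by simpa using LinearMap.congr_fun hb a
  calc (∀ a, Δ (star a) = tstar A (Δ a))
      ↔ ∀ a b b', pairTT β b b' (Δ (star a)) = pairTT β b b' (tstar A (Δ a)) :=
        forall_congr' fun a => ext_iff_pairTT β hβ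
    _ ↔ ∀ a b b', β a (σ (b * b')) = β a (σ b * σ b') := by
        simp only [pairTT_tstar β hσ, hΔ, hσ, (starRingEnd ℂ).injective.eq_iff]
    _ ↔ ∀ b b', σ (b * b') = σ b * σ b' := by
        simp only [← hβflip.eq_iff, LinearMap.ext_iff, LinearMap.flip_apply]
        exact ⟨fun h b b' a => h a b b', fun h a b b' => h b b' a⟩

/-- For a non-degenerate pairing of finite-dimensional unital
*-algebras `A`, `B` with induced coproduct `Δ` on `A` and map `S_B` defined by
`⟨a, (S_B b)*⟩ = conj ⟨a*, b⟩`, the coproduct `Δ` is a *-map iff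
`b ↦ (S_B b)*` is multiplicative. -/
theorem coprod_star_iff_SB_star_mul
    {A B : Type*} [Ring A] [Algebra ℂ A] [StarRing A] [StarModule ℂ A]
    [FiniteDimensional ℂ A]
    [Ring B] [Algebra ℂ B] [StarRing B] [StarModule ℂ B]
    [FiniteDimensional ℂ B]
    (β : A →ₗ[ℂ] B →ₗ[ℂ] ℂ)
    (hβA : ∀ a : A, (∀ b : B, β a b = 0) → a = 0)
    (hβB : ∀ b : B, (∀ a : A, β a b = 0) → b = 0)
    (Δ : A →ₗ[ℂ] A ⊗[ℂ] A)
    (hΔ : ∀ (a : A) (b b' : B), pairTT β b b' (Δ a) = β a (b * b'))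
    (SB : B →ₗ[ℂ] B)
    (hSB : ∀ (a : A) (b : B), β a (star (SB b)) = starRingEnd ℂ (β (star a) b)) :
    (∀ a : A, Δ (star a) = tstar A (Δ a)) ↔
      (∀ b b' : B, star (SB (b * b')) = star (SB b) * star (SB b')) :=
  coprod_star_iff_SB_star_mul_general β hβA hβB Δ hΔ SB hSB
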